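/- arXiv:1712.08133 — 2 statements merged into one kernel-verified Lean document; each statement's English description precedes it below -/
import Mathlib

section
/- Let v be a C² function on an open set of ℝ^{n+1} where it is harmonic. Then the vector field z ↦ |∇v(z)|² z − 2 (z·∇v(z)) ∇v(z) has divergence equal to (n−1)|∇v(z)|² at every point of that set. -/
open InnerProductSpace EuclideanSpace

theorem sum_single_apply' (n : ℕ) (c : Fin (n+1) → ℝ) (j : Fin (n+1)) :
    (∑ x : Fin (n+1), c x • EuclideanSpace.single x (1:ℝ)) j = c j := by
  have : ∀ s : Finset (Fin (n+1)), (∑ x ∈ s, c x • EuclideanSpace.single x (1:ℝ)) j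
      = ∑ x ∈ s, (c x • EuclideanSpace.single x (1:ℝ)) j := by
    intro s
    induction s using Finset.induction with
    | empty => rfl
    | insert _ _ h ih => rw [Finset.sum_insert h, Finset.sum_insert h, ← ih]; rfl
  rw [this]
  simp [EuclideanSpace.single_apply]

/-- Rellich–Pohozaev divergence identity: if `v` is `C²` and harmonic on an open
set `U ⊆ ℝ^{n+1}`, then the vector field
`z ↦ |∇v(z)|² z − 2 (z·∇v(z)) ∇v(z)` has divergence `(n−1)|∇v(z)|²` on `U`. -/
theorem stmt_1 (n : ℕ) (U : Set (EuclideanSpace ℝ (Fin (n+1))))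
    (hU : IsOpen U) (v : EuclideanSpace ℝ (Fin (n+1)) → ℝ)
    (hv : ContDiffOn ℝ 2 v U)
    (hharm : ∀ z ∈ U, ∑ i : Fin (n+1),
      fderiv ℝ (fun w => fderiv ℝ v w (EuclideanSpace.single i 1)) z
        (EuclideanSpace.single i 1) = 0) :
    ∀ z ∈ U, ∑ i : Fin (n+1),
      (fderiv ℝ (fun w => (‖gradient v w‖ ^ 2) • w
          - (2 * (inner ℝ w (gradient v w) : ℝ)) • gradient v w) z
        (EuclideanSpace.single i 1)) i
      = ((n : ℝ) - 1) * ‖gradient v z‖ ^ 2 := by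
  intro z hz
  have hv2 : ContDiffAt ℝ 2 v z := hv.contDiffAt (hU.mem_nhds hz)
  have hdfv : DifferentiableAt ℝ (fderiv ℝ v) z :=
    ((hv2.fderiv_right (le_refl 2)).differentiableAt one_ne_zero)
  set f'' := fderiv ℝ (fderiv ℝ v) z with hf''
  have hsym : ∀ a b, f'' a b = f'' b a := fun a b => (hv2.isSymmSndFDerivAt (by simp [minSmoothness_of_isRCLikeNormedField])).eq a b
  have hdecomp : ∀ x : EuclideanSpace ℝ (Fin (n+1)),
      (∑ i : Fin (n+1), x i • EuclideanSpace.single i (1:ℝ)) = x := by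
    intro x; ext j; rw [sum_single_apply']
  have hgeq : gradient v = fun w => ∑ i : Fin (n+1),
      (fderiv ℝ v w (EuclideanSpace.single i 1)) • EuclideanSpace.single i 1 := by
    funext w
    ext j
    have h1 : (inner ℝ (gradient v w) (EuclideanSpace.single j (1:ℝ)) : ℝ)
        = fderiv ℝ v w (EuclideanSpace.single j 1) := toDual_symm_apply
    rw [EuclideanSpace.inner_single_right] at h1
    simp only [map_one, one_mul, RCLike.conj_to_real, starRingEnd_apply, star_trivial] at h1
    rw [sum_single_apply', ← h1]
  set B : EuclideanSpace ℝ (Fin (n+1)) →L[ℝ] EuclideanSpace ℝ (Fin (n+1)) :=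
    ∑ i : Fin (n+1), ((ContinuousLinearMap.apply ℝ ℝ (EuclideanSpace.single i 1)).comp
      f'').smulRight (EuclideanSpace.single i 1) with hB
  have hgd : HasFDerivAt (gradient v) B z := by
    rw [hgeq]
    exact HasFDerivAt.fun_sum fun i _ =>
      ((ContinuousLinearMap.apply ℝ ℝ (EuclideanSpace.single i 1)).hasFDerivAt.comp z
        hdfv.hasFDerivAt).smul_const (EuclideanSpace.single i (1:ℝ))
  have hBco : ∀ (u : EuclideanSpace ℝ (Fin (n+1))) (j : Fin (n+1)),
      (B u) j = f'' u (EuclideanSpace.single j 1) := by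
    intro u j
    rw [hB]
    simp only [ContinuousLinearMap.sum_apply, ContinuousLinearMap.smulRight_apply,
      ContinuousLinearMap.comp_apply, ContinuousLinearMap.apply_apply]
    rw [sum_single_apply']
  have hlin : ∀ (φ : EuclideanSpace ℝ (Fin (n+1)) →L[ℝ] ℝ) (x : EuclideanSpace ℝ (Fin (n+1))),
      ∑ i : Fin (n+1), φ (EuclideanSpace.single i 1) * x i = φ x := by
    intro φ x
    conv_rhs => rw [← hdecomp x]
    rw [map_sum]
    exact Finset.sum_congr rfl fun i _ => by rw [map_smul]; simp [mul_comm]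
  have htr : ∑ i : Fin (n+1), f'' (EuclideanSpace.single i 1) (EuclideanSpace.single i 1) = 0 := by
    have heval : ∀ e : EuclideanSpace ℝ (Fin (n+1)),
        fderiv ℝ (fun w => fderiv ℝ v w e) z = (ContinuousLinearMap.apply ℝ ℝ e).comp f'' :=
      fun e => ((ContinuousLinearMap.apply ℝ ℝ e).hasFDerivAt.comp z hdfv.hasFDerivAt).fderiv
    have := hharm z hz
    simp only [heval, ContinuousLinearMap.comp_apply, ContinuousLinearMap.apply_apply] at this
    exact this
  have hBinner : ∀ (u x : EuclideanSpace ℝ (Fin (n+1))), (inner ℝ (B u) x : ℝ) = f'' u x := by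
    intro u x
    rw [PiLp.inner_apply]
    simp only [RCLike.inner_apply, conj_trivial, hBco]
    simpa only [mul_comm] using hlin (f'' u) x
  have hBinner' : ∀ (u x : EuclideanSpace ℝ (Fin (n+1))), (inner ℝ x (B u) : ℝ) = f'' u x := by
    intro u x; rw [real_inner_comm]; exact hBinner u x
  -- the main derivative
  have h1 : HasFDerivAt (fun w => (inner ℝ (gradient v w) (gradient v w) : ℝ))
      ((fderivInnerCLM ℝ (gradient v z, gradient v z)).comp (B.prod B)) z :=
    HasFDerivAt.inner (𝕜 := ℝ) hgd hgd
  have h2 : HasFDerivAt (fun w => (inner ℝ w (gradient v w) : ℝ))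
      ((fderivInnerCLM ℝ (z, gradient v z)).comp
        ((ContinuousLinearMap.id ℝ _).prod B)) z :=
    HasFDerivAt.inner (𝕜 := ℝ) (hasFDerivAt_id z) hgd
  have h3 := h2.const_mul (2:ℝ)
  have hFmain := (h1.smul (hasFDerivAt_id z)).sub (h3.smul hgd)
  simp only [id_eq] at hFmain
  simp only [← real_inner_self_eq_norm_sq]
  rw [(show HasFDerivAt (fun w => (inner ℝ (gradient v w) (gradient v w) : ℝ) • w
      - (2 * (inner ℝ w (gradient v w) : ℝ)) • gradient v w) _ z from hFmain).fderiv]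
  simp only [ContinuousLinearMap.add_apply, ContinuousLinearMap.sub_apply,
    ContinuousLinearMap.smul_apply, ContinuousLinearMap.smulRight_apply,
    ContinuousLinearMap.comp_apply, ContinuousLinearMap.prod_apply,
    ContinuousLinearMap.id_apply, fderivInnerCLM_apply, smul_eq_mul,
    PiLp.add_apply, PiLp.sub_apply, PiLp.smul_apply, hBinner, hBinner',
    EuclideanSpace.inner_single_left, conj_trivial, one_mul, hBco]
  -- now pure algebra with sums
  have key : ∀ i : Fin (n+1),
      (inner ℝ (gradient v z) (gradient v z) : ℝ) * (EuclideanSpace.single i (1:ℝ)) i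
        + (f'' (EuclideanSpace.single i 1) (gradient v z)
            + f'' (EuclideanSpace.single i 1) (gradient v z)) * z i
        - (2 * (inner ℝ z (gradient v z) : ℝ) * f'' (EuclideanSpace.single i 1) (EuclideanSpace.single i 1)
            + 2 * (f'' (EuclideanSpace.single i 1) z + (gradient v z) i) * (gradient v z) i)
      = (inner ℝ (gradient v z) (gradient v z) : ℝ)
        + 2 * ((f'' (gradient v z)) (EuclideanSpace.single i 1) * z i)
        - 2 * (inner ℝ z (gradient v z) : ℝ) * f'' (EuclideanSpace.single i 1) (EuclideanSpace.single i 1)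
        - 2 * ((f'' z) (EuclideanSpace.single i 1) * (gradient v z) i)
        - 2 * ((gradient v z) i * (gradient v z) i) := by
    intro i
    rw [hsym (EuclideanSpace.single i 1) (gradient v z), hsym (EuclideanSpace.single i 1) z]
    simp [EuclideanSpace.single_apply]
    ring
  rw [Finset.sum_congr rfl fun i _ => key i]
  have hgg : ∑ i : Fin (n+1), gradient v z i * gradient v z i
      = (inner ℝ (gradient v z) (gradient v z) : ℝ) := by
    rw [PiLp.inner_apply]; simp [RCLike.inner_apply, ← sq]
  simp only [Finset.sum_sub_distrib, Finset.sum_add_distrib, ← Finset.mul_sum,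
    Finset.sum_const, Finset.card_univ, Fintype.card_fin, nsmul_eq_mul,
    hlin (f'' (gradient v z)) z, hlin (f'' z) (gradient v z), htr, hgg]
  rw [hsym (gradient v z) z]
  push_cast
  ring
end

section
/- Let h : B̄₁ → ℝ (B₁ ⊂ ℝ^{n+1} the unit ball) be continuous, harmonic in B₁ ∩ {|y| > 0}, and satisfy for constants c₀ > 0, η ∈ (0, 1/(8n)) and a modulus σ with σ(0)=0: (ii) h ≥ 0 on B₁ ∩ {|y| > η}; (iii) h ≥ c₀ on B₁ ∩ {|y| > 1/(8n)}; (iv) h ≥ −σ(η) on B₁; (v) ∂_y h ≤ σ(η) on B₁ ∩ {y = 0} ∩ {h ≠ 0}, with the Hopf lemma applicable at boundary minima on {y=0}. Then there exists η₀ = η₀(n, c₀, σ) > 0 such that if η < η₀ then h ≥ 0 on B_{1/2}. -/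
set_option maxHeartbeats 1000000

open Set Metric
open scoped RealInnerProductSpace

lemma deriv_nonneg_of_min' (φ : ℝ → ℝ) (d r : ℝ) (hr : 0 < r)
    (hd : HasDerivWithinAt φ d (Set.Ioi 0) 0)
    (hmin : ∀ t ∈ Set.Ioc (0:ℝ) r, φ 0 ≤ φ t) : 0 ≤ d := by
  have hT : Filter.Tendsto (slope φ 0) (nhdsWithin 0 (Set.Ioi 0 \ {0})) (nhds d) :=
    hasDerivWithinAt_iff_tendsto_slope.mp hd
  rw [Set.diff_singleton_eq_self (by simp)] at hT
  have hev : ∀ᶠ t in nhdsWithin (0:ℝ) (Set.Ioi 0), 0 ≤ slope φ 0 t := by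
    filter_upwards [Ioc_mem_nhdsGT hr] with t ht
    rw [slope_def_field]
    have := hmin t ht
    apply div_nonneg (by linarith) (by simpa using ht.1.le)
  exact ge_of_tendsto hT hev

lemma secderiv_nonneg' (φ φ1 : ℝ → ℝ) (c r : ℝ) (hr : 0 < r)
    (hφ : ∀ t ∈ Set.Ioo (-r) r, HasDerivAt φ (φ1 t) t)
    (hφ1 : HasDerivAt φ1 c 0)
    (hmin : ∀ t ∈ Set.Ioo (-r) r, φ 0 ≤ φ t) : 0 ≤ c := by
  have h0mem : (0:ℝ) ∈ Set.Ioo (-r) r := by constructor <;> linarith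
  have hloc : IsLocalMin φ 0 := by
    filter_upwards [Ioo_mem_nhds (by linarith : -r < (0:ℝ)) hr] with t ht using hmin t ht
  have h10 : φ1 0 = 0 := hloc.hasDerivAt_eq_zero (hφ 0 h0mem)
  by_contra hc
  push_neg at hc
  have hT : Filter.Tendsto (slope φ1 0) (nhdsWithin 0 ({0}ᶜ)) (nhds c) :=
    hasDerivAt_iff_tendsto_slope.mp hφ1
  have hev : ∀ᶠ t in nhdsWithin (0:ℝ) ({0}ᶜ), slope φ1 0 t < c/2 :=
    hT.eventually (gt_mem_nhds (by linarith))
  rw [eventually_nhdsWithin_iff] at hev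
  rw [Metric.eventually_nhds_iff] at hev
  obtain ⟨ε, hε, hev⟩ := hev
  set t₁ := min ε r / 2 with ht₁def
  have ht₁pos : 0 < t₁ := by positivity
  have ht₁ε : t₁ < ε := by
    have h1 := min_le_left ε r
    rw [ht₁def]; linarith
  have ht₁r : t₁ < r := by
    have h1 := min_le_right ε r
    rw [ht₁def]; linarith
  have hneg : ∀ x ∈ Set.Ioo (0:ℝ) t₁, φ1 x < 0 := by
    intro x hx
    have hx0 : x ≠ 0 := ne_of_gt hx.1
    have hdist : dist x 0 < ε := by
      rw [Real.dist_eq, sub_zero, abs_of_pos hx.1]; linarith [hx.2]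
    have hs := hev hdist hx0
    rw [slope_def_field, h10, sub_zero, sub_zero] at hs
    have : φ1 x < c/2 * x := by
      rw [div_lt_iff₀ hx.1] at hs; linarith [hs]
    nlinarith [hx.1]
  have hcont : ContinuousOn φ (Set.Icc 0 t₁) := by
    intro u hu
    have hu' : u ∈ Set.Ioo (-r) r := ⟨by linarith [hu.1], by linarith [hu.2]⟩
    exact ((hφ u hu').continuousAt).continuousWithinAt
  have hanti : StrictAntiOn φ (Set.Icc 0 t₁) := by
    apply strictAntiOn_of_deriv_neg (convex_Icc 0 t₁) hcont
    intro x hx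
    rw [interior_Icc] at hx
    have hx' : x ∈ Set.Ioo (-r) r := ⟨by linarith [hx.1], by linarith [hx.2]⟩
    rw [(hφ x hx').deriv]
    exact hneg x hx
  have h1 : φ t₁ < φ 0 :=
    hanti (Set.left_mem_Icc.mpr ht₁pos.le) (Set.right_mem_Icc.mpr ht₁pos.le) ht₁pos
  have h2 : φ 0 ≤ φ t₁ := hmin t₁ ⟨by linarith, ht₁r⟩
  linarith

noncomputable def barW (n : ℕ) (h : EuclideanSpace ℝ (Fin (n+1)) → ℝ) (c₀ s ε : ℝ)
    (v : EuclideanSpace ℝ (Fin (n+1))) (z : EuclideanSpace ℝ (Fin (n+1))) : ℝ :=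
  h z + (c₀/2) * (‖z - v‖^2 - (2*(n:ℝ)+1) * (z (Fin.last n))^2) - 2*s*ε*(z (Fin.last n))

def barK (n : ℕ) (ε : ℝ) (v : EuclideanSpace ℝ (Fin (n+1))) :
    Set (EuclideanSpace ℝ (Fin (n+1))) :=
  {z | ‖z - v‖^2 - (z (Fin.last n))^2 ≤ 1/25 ∧ 0 ≤ ε * z (Fin.last n) ∧
       ε * z (Fin.last n) ≤ 2/(15*(n:ℝ))}

lemma coord_sq_le_norm_sq {n : ℕ} (x : EuclideanSpace ℝ (Fin (n+1))) (i : Fin (n+1)) :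
    (x i)^2 ≤ ‖x‖^2 := by
  have h := abs_real_inner_le_norm x (EuclideanSpace.single i (1:ℝ))
  rw [EuclideanSpace.norm_single] at h
  simp only [EuclideanSpace.inner_single_right, norm_one, mul_one, RCLike.conj_to_real,
    one_mul] at h
  have h2 : |x i|^2 ≤ ‖x‖^2 := pow_le_pow_left₀ (abs_nonneg _) h 2
  simpa [sq_abs] using h2

lemma box_barrier (n : ℕ) (hn : 0 < n) (c₀ s : ℝ) (hc₀ : 0 < c₀) (hspos : 0 < s)
    (hslt : s < c₀/900)
    (h : EuclideanSpace ℝ (Fin (n+1)) → ℝ)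
    (hcont : ContinuousOn h (Metric.closedBall 0 1))
    (hC2 : ContDiffOn ℝ 2 h
      (Metric.ball 0 1 ∩ {z : EuclideanSpace ℝ (Fin (n+1)) | z (Fin.last n) ≠ 0}))
    (harm : ∀ z ∈ Metric.ball (0 : EuclideanSpace ℝ (Fin (n+1))) 1
        ∩ {z : EuclideanSpace ℝ (Fin (n+1)) | z (Fin.last n) ≠ 0},
      ∑ i : Fin (n+1),
        fderiv ℝ (fun w => fderiv ℝ h w (EuclideanSpace.single i 1)) z
          (EuclideanSpace.single i 1) = 0)
    (hiii : ∀ z ∈ Metric.ball (0 : EuclideanSpace ℝ (Fin (n+1))) 1,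
      1 / (8 * n) < |z (Fin.last n)| → c₀ ≤ h z)
    (hiv : ∀ z ∈ Metric.ball (0 : EuclideanSpace ℝ (Fin (n+1))) 1, -s ≤ h z)
    (ε : ℝ) (hε : ε = 1 ∨ ε = -1)
    (v : EuclideanSpace ℝ (Fin (n+1))) (hvl : v (Fin.last n) = 0) (hv : ‖v‖ ≤ 7/10)
    (Hface : ∀ z ∈ barK n ε v, z (Fin.last n) = 0 →
      IsMinOn (barW n h c₀ s ε v) (barK n ε v) z → 0 ≤ h z + (c₀/2) * ‖z - v‖^2) :
    ∀ z ∈ barK n ε v, 0 ≤ barW n h c₀ s ε v z := by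
  intro z₀ hz₀
  have hN : (1:ℝ) ≤ (n:ℝ) := by exact_mod_cast hn
  have hε2 : ε * ε = 1 := by rcases hε with rfl | rfl <;> norm_num
  have hεabs : |ε| = 1 := by rcases hε with rfl | rfl <;> norm_num
  set ℓ := Fin.last n with hℓ
  set b : ℝ := 2/(15*(n:ℝ)) with hbdef
  have hbpos : 0 < b := by positivity
  have hble : b ≤ 2/15 := by
    rw [hbdef]
    rw [div_le_div_iff₀ (by positivity) (by norm_num)]
    nlinarith
  -- facts about membership in K
  have hKfacts : ∀ z ∈ barK n ε v, |z ℓ| ≤ b ∧ ‖z - v‖ ≤ 1/4 ∧ ‖z‖ ≤ 19/20 := by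
    intro z hz
    obtain ⟨h1, h2, h3⟩ := hz
    rw [← hbdef] at h3
    have habs : |z ℓ| ≤ b := by
      rcases hε with rfl | rfl
      · rw [one_mul] at h2 h3; rwa [abs_of_nonneg h2]
      · have h2' : z ℓ ≤ 0 := by nlinarith
        rw [abs_of_nonpos h2']; nlinarith
    have hsq : (z ℓ)^2 ≤ b^2 := sq_le_sq' (by linarith [abs_le.mp habs]) (by linarith [abs_le.mp habs])
    have hb2 : b^2 ≤ 4/225 := by
      have : b ≤ 2/15 := hble
      nlinarith [hbpos]
    have hnv2 : ‖z - v‖^2 ≤ 1/16 := by nlinarith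
    have hnv : ‖z - v‖ ≤ 1/4 := by nlinarith [norm_nonneg (z - v)]
    refine ⟨habs, hnv, ?_⟩
    have hvz : v + (z - v) = z := by abel
    calc ‖z‖ = ‖v + (z - v)‖ := by rw [hvz]
      _ ≤ ‖v‖ + ‖z - v‖ := norm_add_le _ _
      _ ≤ 7/10 + 1/4 := add_le_add hv hnv
      _ ≤ 19/20 := by norm_num
  have hKball : ∀ z ∈ barK n ε v, z ∈ Metric.ball (0 : EuclideanSpace ℝ (Fin (n+1))) 1 := by
    intro z hz
    rw [mem_ball_zero_iff]
    linarith [(hKfacts z hz).2.2]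
  have hKcb : barK n ε v ⊆ Metric.closedBall (0 : EuclideanSpace ℝ (Fin (n+1))) 1 :=
    fun z hz => Metric.ball_subset_closedBall (hKball z hz)
  -- continuity of w on K
  have hprojcont : Continuous (fun z : EuclideanSpace ℝ (Fin (n+1)) => z ℓ) :=
    (EuclideanSpace.proj ℓ).continuous
  have hwcont : ContinuousOn (barW n h c₀ s ε v) (barK n ε v) := by
    apply ContinuousOn.sub
    apply ContinuousOn.add
    · exact hcont.mono hKcb
    · apply Continuous.continuousOn
      exact continuous_const.mul
        (((continuous_id.sub continuous_const).norm.pow 2).sub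
          (continuous_const.mul (hprojcont.pow 2)))
    · exact (continuous_const.mul hprojcont).continuousOn
  -- compactness of K
  have hKclosed : IsClosed (barK n ε v) := by
    have e1 : IsClosed {z : EuclideanSpace ℝ (Fin (n+1)) |
        ‖z - v‖^2 - (z ℓ)^2 ≤ 1/25} :=
      isClosed_le (((continuous_id.sub continuous_const).norm.pow 2).sub (hprojcont.pow 2))
        continuous_const
    have e2 : IsClosed {z : EuclideanSpace ℝ (Fin (n+1)) | 0 ≤ ε * z ℓ} :=
      isClosed_le continuous_const (continuous_const.mul hprojcont)
    have e3 : IsClosed {z : EuclideanSpace ℝ (Fin (n+1)) | ε * z ℓ ≤ b} :=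
      isClosed_le (continuous_const.mul hprojcont) continuous_const
    exact (e1.inter (e2.inter e3))
  have hKcomp : IsCompact (barK n ε v) := by
    apply IsCompact.of_isClosed_subset (isCompact_closedBall v (1/4)) hKclosed
    intro z hz
    rw [Metric.mem_closedBall, dist_eq_norm]
    exact (hKfacts z hz).2.1
  -- minimum point
  obtain ⟨zs, hzsK, hminOn⟩ := hKcomp.exists_isMinOn ⟨z₀, hz₀⟩ hwcont
  suffices hstar : 0 ≤ barW n h c₀ s ε v zs by
    exact le_trans hstar (isMinOn_iff.mp hminOn z₀ hz₀)
  obtain ⟨hz1, hz2, hz3⟩ := hzsK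
  have hzsK' : zs ∈ barK n ε v := ⟨hz1, hz2, hz3⟩
  have hzsball := hKball zs ⟨hz1, hz2, hz3⟩
  have habs : |zs ℓ| ≤ b := (hKfacts zs ⟨hz1, hz2, hz3⟩).1
  have hzsq : (zs ℓ)^2 ≤ b^2 := sq_le_sq' (by linarith [abs_le.mp habs]) (by linarith [abs_le.mp habs])
  have hcoord : (zs ℓ)^2 ≤ ‖zs - v‖^2 := by
    have h1 := coord_sq_le_norm_sq (zs - v) ℓ
    have h2 : (zs - v) ℓ = zs ℓ := by
      simp [PiLp.sub_apply, hvl]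
    rwa [h2] at h1
  have hnb2 : 2*(n:ℝ)*b^2 ≤ 8/225 := by
    have hb' : 2*(n:ℝ)*b^2 = 8/(225*(n:ℝ)) := by
      rw [hbdef]; field_simp; ring
    rw [hb', div_le_div_iff₀ (by positivity) (by norm_num)]
    nlinarith [hN]
  rw [← hbdef] at hz3
  have hεz : ε * zs ℓ ≤ b := hz3
  have hεznn : 0 ≤ ε * zs ℓ := hz2
  have hW : barW n h c₀ s ε v zs
      = h zs + (c₀/2) * (‖zs - v‖^2 - (2*(n:ℝ)+1) * (zs ℓ)^2) - 2*s*(ε*zs ℓ) := by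
    rw [barW]; ring
  rcases eq_or_lt_of_le hz3 with htop | hlt3
  · -- top face : ε * zs ℓ = b
    have hzabs : |zs ℓ| = b := by
      have h' : |ε * zs ℓ| = b := by rw [abs_of_nonneg hz2]; exact htop
      rwa [abs_mul, hεabs, one_mul] at h'
    have hziii : 1/(8*(n:ℝ)) < |zs ℓ| := by
      rw [hzabs, hbdef, div_lt_div_iff₀ (by positivity) (by positivity)]
      nlinarith
    have hc := hiii zs hzsball hziii
    have hsq' : (zs ℓ)^2 = b^2 := by rw [← sq_abs, hzabs]
    rw [hW]
    have hP : ‖zs - v‖^2 - (2*(n:ℝ)+1) * (zs ℓ)^2 ≥ -(8/225) := by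
      nlinarith [hcoord, hsq', hnb2]
    have h2s : 2*s*(ε*zs ℓ) ≤ 2*s*(2/15) := by nlinarith [hspos, hεz, hble]
    nlinarith [hc, hP, h2s, hc₀, hspos, hslt]
  rcases eq_or_lt_of_le hz1 with hlat | hlt1
  · -- lateral face : ‖zs - v‖^2 - (zs ℓ)^2 = 1/25
    have hmS := hiv zs hzsball
    rw [hW]
    have hP : ‖zs - v‖^2 - (2*(n:ℝ)+1) * (zs ℓ)^2 ≥ 1/225 := by
      nlinarith [hlat.symm, hzsq, hnb2, hN]
    have h2s : 2*s*(ε*zs ℓ) ≤ 2*s*(2/15) := by nlinarith [hspos, hεz, hble]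
    nlinarith [hmS, hP, h2s, hc₀, hspos, hslt]
  rcases eq_or_lt_of_le hz2 with hface | hlt2
  · -- equator face : zs ℓ = 0
    have hz0 : zs ℓ = 0 := by
      rcases hε with rfl | rfl
      · simpa using hface.symm
      · have h' : -(zs ℓ) = 0 := by rw [← hface.symm]; ring
        linarith
    have hF := Hface zs hzsK' hz0 hminOn
    rw [hW, hz0]
    ring_nf
    ring_nf at hF
    linarith [hF]
  · -- interior : contradiction with harmonicity
    exfalso
    have hzℓne : zs ℓ ≠ 0 := by
      intro h0
      rw [h0, mul_zero] at hlt2; exact lt_irrefl 0 hlt2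
    set U := Metric.ball (0 : EuclideanSpace ℝ (Fin (n+1))) 1 ∩
      {z : EuclideanSpace ℝ (Fin (n+1)) | z (Fin.last n) ≠ 0} with hUdef
    have hUopen : IsOpen U :=
      Metric.isOpen_ball.inter (isOpen_ne_fun hprojcont continuous_const)
    have hzU : zs ∈ U := ⟨hzsball, hzℓne⟩
    set O := ({y : EuclideanSpace ℝ (Fin (n+1)) | ‖y - v‖^2 - (y (Fin.last n))^2 < 1/25} ∩
      ({y : EuclideanSpace ℝ (Fin (n+1)) | 0 < ε * y (Fin.last n)} ∩
       {y : EuclideanSpace ℝ (Fin (n+1)) | ε * y (Fin.last n) < b})) with hOdef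
    have hOopen : IsOpen O := by
      refine IsOpen.inter ?_ (IsOpen.inter ?_ ?_)
      · exact isOpen_lt (((continuous_id.sub continuous_const).norm.pow 2).sub
          (hprojcont.pow 2)) continuous_const
      · exact isOpen_lt continuous_const (continuous_const.mul hprojcont)
      · exact isOpen_lt (continuous_const.mul hprojcont) continuous_const
    have hOK : O ⊆ barK n ε v := fun y hy => ⟨hy.1.le, hy.2.1.le, hy.2.2.le⟩
    have hzO : zs ∈ O := ⟨hlt1, hlt2, hlt3⟩
    obtain ⟨r, hrpos, hrball⟩ := Metric.isOpen_iff.mp (hOopen.inter hUopen) zs ⟨hzO, hzU⟩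
    have hdiffh : DifferentiableOn ℝ h U := hC2.differentiableOn (by norm_num)
    have hfC1 : ContDiffOn ℝ 1 (fderiv ℝ h) U := hC2.fderiv_of_isOpen hUopen (by norm_num)
    have key : ∀ i : Fin (n+1),
        0 ≤ fderiv ℝ (fun y => fderiv ℝ h y (EuclideanSpace.single i 1)) zs
              (EuclideanSpace.single i 1)
            + 2*((c₀/2) * (1 - (2*(n:ℝ)+1) * (if Fin.last n = i then (1:ℝ) else 0))) := by
      intro i
      set Ei : ℝ := if Fin.last n = i then (1:ℝ) else 0 with hEidef
      have hEisq : Ei^2 = Ei := by rw [hEidef]; split <;> norm_num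
      set ip : ℝ := ⟪zs - v, EuclideanSpace.single i (1:ℝ)⟫ with hipdef
      set A1 : ℝ := (c₀/2)*(2*ip - (2*(n:ℝ)+1)*(2*(zs (Fin.last n))*Ei)) - 2*s*ε*Ei with hA1
      set A2 : ℝ := (c₀/2)*(1 - (2*(n:ℝ)+1)*Ei) with hA2
      have hγd : ∀ t : ℝ, HasDerivAt (fun t : ℝ => zs + t • EuclideanSpace.single i (1:ℝ))
          (EuclideanSpace.single i (1:ℝ)) t := by
        intro t
        simpa using ((hasDerivAt_id t).smul_const (EuclideanSpace.single i (1:ℝ))).const_add zs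
      have hγmem : ∀ t : ℝ, |t| < r → (zs + t • EuclideanSpace.single i (1:ℝ)) ∈ O ∩ U := by
        intro t ht
        apply hrball
        rw [Metric.mem_ball, dist_eq_norm]
        have e0 : zs + t • EuclideanSpace.single i (1:ℝ) - zs
            = t • EuclideanSpace.single i (1:ℝ) := by abel
        rw [e0, norm_smul, EuclideanSpace.norm_single, norm_one, mul_one, Real.norm_eq_abs]
        exact ht
      have idA : ∀ t : ℝ, ‖(zs + t • EuclideanSpace.single i (1:ℝ)) - v‖^2
          = ‖zs - v‖^2 + 2*t*ip + t^2 := by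
        intro t
        have e1 : (zs + t • EuclideanSpace.single i (1:ℝ)) - v
            = (zs - v) + t • EuclideanSpace.single i (1:ℝ) := by abel
        rw [e1, norm_add_sq_real, real_inner_smul_right, norm_smul,
          EuclideanSpace.norm_single, norm_one, mul_one, Real.norm_eq_abs, sq_abs, hipdef]
        ring
      have idB : ∀ t : ℝ, (zs + t • EuclideanSpace.single i (1:ℝ)) (Fin.last n)
          = zs (Fin.last n) + t * Ei := by
        intro t
        rw [hEidef]
        simp [EuclideanSpace.single_apply, mul_ite]
      have hident : ∀ t : ℝ, barW n h c₀ s ε v (zs + t • EuclideanSpace.single i (1:ℝ))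
          = h (zs + t • EuclideanSpace.single i (1:ℝ)) + (A1*t + A2*t^2)
            + ((c₀/2) * (‖zs - v‖^2 - (2*(n:ℝ)+1) * (zs (Fin.last n))^2)
               - 2*s*ε*(zs (Fin.last n))) := by
        intro t
        rw [barW, idA t, idB t, hA1, hA2]
        linear_combination (-(c₀/2) * (2*(n:ℝ)+1) * t^2) * hEisq
      have hφd : ∀ t ∈ Set.Ioo (-r) r,
          HasDerivAt (fun u : ℝ => barW n h c₀ s ε v (zs + u • EuclideanSpace.single i (1:ℝ)))
            (fderiv ℝ h (zs + t • EuclideanSpace.single i (1:ℝ))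
              (EuclideanSpace.single i (1:ℝ)) + (A1 + 2*A2*t)) t := by
        intro t ht
        have htabs : |t| < r := abs_lt.mpr ⟨ht.1, ht.2⟩
        have htU : (zs + t • EuclideanSpace.single i (1:ℝ)) ∈ U := (hγmem t htabs).2
        have hhd : DifferentiableAt ℝ h (zs + t • EuclideanSpace.single i (1:ℝ)) :=
          hdiffh.differentiableAt (hUopen.mem_nhds htU)
        have h1 : HasDerivAt (fun u : ℝ => h (zs + u • EuclideanSpace.single i (1:ℝ)))
            (fderiv ℝ h (zs + t • EuclideanSpace.single i (1:ℝ))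
              (EuclideanSpace.single i (1:ℝ))) t :=
          (hhd.hasFDerivAt).comp_hasDerivAt t (hγd t)
        have h2 : HasDerivAt (fun u : ℝ => A1*u + A2*u^2) (A1 + 2*A2*t) t := by
          have ha := ((hasDerivAt_id t).const_mul A1).add ((hasDerivAt_pow 2 t).const_mul A2)
          refine ha.congr_deriv ?_
          norm_num
          ring
        have h3 := (h1.add h2).add_const
          ((c₀/2) * (‖zs - v‖^2 - (2*(n:ℝ)+1) * (zs (Fin.last n))^2)
            - 2*s*ε*(zs (Fin.last n)))
        refine HasDerivAt.congr_of_eventuallyEq h3 ?_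
        filter_upwards with u
        exact hident u
      have hgd2 : HasDerivAt
          (fun t : ℝ => fderiv ℝ h (zs + t • EuclideanSpace.single i (1:ℝ))
            (EuclideanSpace.single i (1:ℝ)) + (A1 + 2*A2*t))
          (fderiv ℝ (fun y => fderiv ℝ h y (EuclideanSpace.single i 1)) zs
            (EuclideanSpace.single i 1) + 2*A2) 0 := by
        have hdg : DifferentiableAt ℝ (fun y => fderiv ℝ h y) zs :=
          (hfC1.differentiableOn (by norm_num)).differentiableAt (hUopen.mem_nhds hzU)
        have hdg2 : DifferentiableAt ℝ
            (fun y => fderiv ℝ h y (EuclideanSpace.single i (1:ℝ))) zs :=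
          hdg.clm_apply (differentiableAt_const _)
        have h1 : HasDerivAt
            (fun t : ℝ => fderiv ℝ h (zs + t • EuclideanSpace.single i (1:ℝ))
              (EuclideanSpace.single i (1:ℝ)))
            (fderiv ℝ (fun y => fderiv ℝ h y (EuclideanSpace.single i 1)) zs
              (EuclideanSpace.single i 1)) 0 := by
          have h0e : zs + (0:ℝ) • EuclideanSpace.single i (1:ℝ) = zs := by simp
          have hfd := hdg2.hasFDerivAt
          rw [← h0e] at hfd
          have hc := hfd.comp_hasDerivAt 0 (hγd 0)
          rw [h0e] at hc
          exact hc
        have h2 : HasDerivAt (fun t : ℝ => A1 + 2*A2*t) (2*A2) 0 := by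
          simpa using ((hasDerivAt_id (0:ℝ)).const_mul (2*A2)).const_add A1
        exact h1.add h2
      have hφmin : ∀ t ∈ Set.Ioo (-r) r,
          barW n h c₀ s ε v (zs + (0:ℝ) • EuclideanSpace.single i (1:ℝ))
            ≤ barW n h c₀ s ε v (zs + t • EuclideanSpace.single i (1:ℝ)) := by
        intro t ht
        have htabs : |t| < r := abs_lt.mpr ⟨ht.1, ht.2⟩
        have hK := hOK (hγmem t htabs).1
        have hle := isMinOn_iff.mp hminOn _ hK
        simpa using hle
      have hfin := secderiv_nonneg'
        (fun u : ℝ => barW n h c₀ s ε v (zs + u • EuclideanSpace.single i (1:ℝ)))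
        (fun t : ℝ => fderiv ℝ h (zs + t • EuclideanSpace.single i (1:ℝ))
          (EuclideanSpace.single i (1:ℝ)) + (A1 + 2*A2*t))
        (fderiv ℝ (fun y => fderiv ℝ h y (EuclideanSpace.single i 1)) zs
          (EuclideanSpace.single i 1) + 2*A2) r hrpos hφd hgd2 hφmin
      rw [hA2] at hfin
      rw [hEidef] at hfin
      exact hfin
    have hsumpos : 0 ≤ ∑ i : Fin (n+1),
        (fderiv ℝ (fun y => fderiv ℝ h y (EuclideanSpace.single i 1)) zs
          (EuclideanSpace.single i 1)
          + 2*((c₀/2) * (1 - (2*(n:ℝ)+1) * (if Fin.last n = i then (1:ℝ) else 0)))) :=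
      Finset.sum_nonneg (fun i _ => key i)
    rw [Finset.sum_add_distrib] at hsumpos
    have hharm := harm zs ⟨hzsball, hzℓne⟩
    rw [hharm, zero_add] at hsumpos
    have hsum2 : ∑ i : Fin (n+1),
        2*((c₀/2) * (1 - (2*(n:ℝ)+1) * (if Fin.last n = i then (1:ℝ) else 0)))
        = c₀*((n:ℝ)+1) - c₀*(2*(n:ℝ)+1) := by
      have hterm : ∀ i : Fin (n+1),
          2*((c₀/2) * (1 - (2*(n:ℝ)+1) * (if Fin.last n = i then (1:ℝ) else 0)))
          = c₀ - (if Fin.last n = i then c₀*(2*(n:ℝ)+1) else 0) := by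
        intro i; split <;> ring
      rw [Finset.sum_congr rfl (fun i _ => hterm i), Finset.sum_sub_distrib,
        Finset.sum_const, Finset.sum_ite_eq]
      simp [Finset.card_univ]
      push_cast
      ring
    rw [hsum2] at hsumpos
    nlinarith [hc₀, hN]


/-- Barrier lemma (Lemma 7.2): let `h` be continuous on the closed unit ball of
`ℝ^{n+1}`, harmonic off the hyperplane `{y = 0}`, with `h ≥ 0` where `|y| > η`,
`h ≥ c₀` where `|y| > 1/(8n)`, `h ≥ −σ(η)` everywhere, and one-sided derivative
`∂_y h ≤ σ(η)` on the equator where `h ≠ 0`.  Then there is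
`η₀ = η₀(n, c₀, σ) > 0` such that `η < η₀` implies `h ≥ 0` on `B_{1/2}`. -/
theorem stmt_17 (n : ℕ) (hn : 0 < n) (c₀ : ℝ) (hc₀ : 0 < c₀)
    (σ : ℝ → ℝ) (hσc : Continuous σ) (hσ0 : σ 0 = 0) (hσnn : ∀ t, 0 ≤ σ t) :
    ∃ η₀ > (0:ℝ), ∀ η : ℝ, 0 < η → η < η₀ → η < 1 / (8 * n) →
      ∀ h : EuclideanSpace ℝ (Fin (n+1)) → ℝ,
        ContinuousOn h (Metric.closedBall 0 1) →
        ContDiffOn ℝ 2 h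
          (Metric.ball 0 1 ∩ {z : EuclideanSpace ℝ (Fin (n+1)) | z (Fin.last n) ≠ 0}) →
        (∀ z ∈ Metric.ball (0 : EuclideanSpace ℝ (Fin (n+1))) 1
            ∩ {z : EuclideanSpace ℝ (Fin (n+1)) | z (Fin.last n) ≠ 0},
          ∑ i : Fin (n+1),
            fderiv ℝ (fun w => fderiv ℝ h w (EuclideanSpace.single i 1)) z
              (EuclideanSpace.single i 1) = 0) →
        (∀ z ∈ Metric.ball (0 : EuclideanSpace ℝ (Fin (n+1))) 1,
          η < |z (Fin.last n)| → 0 ≤ h z) →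
        (∀ z ∈ Metric.ball (0 : EuclideanSpace ℝ (Fin (n+1))) 1,
          1 / (8 * n) < |z (Fin.last n)| → c₀ ≤ h z) →
        (∀ z ∈ Metric.ball (0 : EuclideanSpace ℝ (Fin (n+1))) 1, -σ η ≤ h z) →
        (∀ z ∈ Metric.ball (0 : EuclideanSpace ℝ (Fin (n+1))) 1,
          z (Fin.last n) = 0 → h z ≠ 0 →
          ∃ d ≤ σ η,
            HasDerivWithinAt
              (fun t : ℝ => h (z + t • EuclideanSpace.single (Fin.last n) 1))
              d (Set.Ioi 0) 0) →
        ∀ z ∈ Metric.ball (0 : EuclideanSpace ℝ (Fin (n+1))) (1/2), 0 ≤ h z := by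
  obtain ⟨η₀, hη₀pos, hη₀⟩ : ∃ η₀ > (0:ℝ), ∀ t : ℝ, |t| < η₀ → σ t < c₀/900 := by
    have h1 : ∀ᶠ t in nhds (0:ℝ), σ t < c₀/900 := by
      have h2 : Filter.Tendsto σ (nhds 0) (nhds 0) := by
        have h3 : ContinuousAt σ 0 := hσc.continuousAt
        rw [ContinuousAt, hσ0] at h3
        exact h3
      exact h2.eventually (gt_mem_nhds (by positivity))
    rw [Metric.eventually_nhds_iff] at h1
    obtain ⟨δ, hδ, hh⟩ := h1
    exact ⟨δ, hδ, fun t ht => hh (by simpa [Real.dist_eq] using ht)⟩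
  refine ⟨η₀, hη₀pos, ?_⟩
  intro η hη hηη₀ hη8 h hcont hC2 harm hii hiii hiv hHopf
  set s := σ η with hsdef
  have hsnn : 0 ≤ s := hσnn η
  have hslt : s < c₀/900 := hη₀ η (by rw [abs_of_pos hη]; exact hηη₀)
  rcases eq_or_lt_of_le hsnn with hs0 | hspos
  · -- σ η = 0 : conclude directly from (iv)
    intro z hz
    have := hiv z (Metric.ball_subset_ball (by norm_num) hz)
    rw [← hs0] at this
    simpa using this
  have hN : (1:ℝ) ≤ (n:ℝ) := by exact_mod_cast hn
  have hb8 : 1/(8*(n:ℝ)) ≤ 2/(15*(n:ℝ)) := by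
    rw [div_le_div_iff₀ (by positivity) (by positivity)]
    nlinarith
  have hη8' : η ≤ 2/(15*(n:ℝ)) := le_trans hη8.le hb8
  have hbpos : (0:ℝ) < 2/(15*(n:ℝ)) := by positivity
  -- Claim U : upper half nonnegativity near the equator
  have claimU : ∀ zb : EuclideanSpace ℝ (Fin (n+1)),
      ‖zb - (zb (Fin.last n)) • EuclideanSpace.single (Fin.last n) (1:ℝ)‖ ≤ 7/10 →
      0 ≤ zb (Fin.last n) → zb (Fin.last n) ≤ η → 0 ≤ h zb := by
    intro zb hpn h0 hle
    set p := zb - (zb (Fin.last n)) • EuclideanSpace.single (Fin.last n) (1:ℝ) with hpdef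
    have hpl : p (Fin.last n) = 0 := by
      rw [hpdef]
      simp [PiLp.sub_apply, PiLp.smul_apply, EuclideanSpace.single_apply]
    have Hface1 : ∀ z ∈ barK n 1 p, z (Fin.last n) = 0 →
        IsMinOn (barW n h c₀ s 1 p) (barK n 1 p) z → 0 ≤ h z + (c₀/2) * ‖z - p‖^2 := by
      intro z hzK hz0 hmin
      by_cases hz : h z = 0
      · rw [hz]; positivity
      exfalso
      obtain ⟨hk1, hk2, hk3⟩ := hzK
      have hk1' : ‖z - p‖^2 ≤ 1/25 := by
        rw [hz0] at hk1; nlinarith [hk1]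
      have hzn : ‖z - p‖ ≤ 1/5 := by nlinarith [norm_nonneg (z - p)]
      have hzball : z ∈ Metric.ball (0 : EuclideanSpace ℝ (Fin (n+1))) 1 := by
        rw [mem_ball_zero_iff]
        have hvz : p + (z - p) = z := by abel
        calc ‖z‖ = ‖p + (z - p)‖ := by rw [hvz]
          _ ≤ ‖p‖ + ‖z - p‖ := norm_add_le _ _
          _ < 1 := by linarith
      obtain ⟨d, hd, hder⟩ := hHopf z hzball hz0 hz
      have hip0 : ⟪z - p, EuclideanSpace.single (Fin.last n) (1:ℝ)⟫ = 0 := by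
        simp [EuclideanSpace.inner_single_right, PiLp.sub_apply, hz0, hpl]
      have idA : ∀ t : ℝ, ‖(z + t • EuclideanSpace.single (Fin.last n) (1:ℝ)) - p‖^2
          = ‖z - p‖^2 + t^2 := by
        intro t
        have e1 : (z + t • EuclideanSpace.single (Fin.last n) (1:ℝ)) - p
            = (z - p) + t • EuclideanSpace.single (Fin.last n) (1:ℝ) := by abel
        rw [e1, norm_add_sq_real, real_inner_smul_right, hip0, norm_smul,
          EuclideanSpace.norm_single, norm_one, mul_one, Real.norm_eq_abs, sq_abs]
        ring
      have idB : ∀ t : ℝ, (z + t • EuclideanSpace.single (Fin.last n) (1:ℝ)) (Fin.last n)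
          = t := by
        intro t
        simp [EuclideanSpace.single_apply, hz0]
      have hident : ∀ t : ℝ,
          barW n h c₀ s 1 p (z + t • EuclideanSpace.single (Fin.last n) (1:ℝ))
          = h (z + t • EuclideanSpace.single (Fin.last n) (1:ℝ))
            + (-(c₀*(n:ℝ))*t^2 - 2*s*t) + (c₀/2) * ‖z - p‖^2 := by
        intro t
        rw [barW, idA t, idB t]
        ring
      have hpoly : HasDerivAt (fun t : ℝ => -(c₀*(n:ℝ))*t^2 - 2*s*t) (-(2*s)) 0 := by
        have ha := ((hasDerivAt_pow 2 (0:ℝ)).const_mul (-(c₀*(n:ℝ)))).sub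
          ((hasDerivAt_id (0:ℝ)).const_mul (2*s))
        refine ha.congr_deriv ?_
        norm_num
      have h3 := (hder.add hpoly.hasDerivWithinAt).add_const ((c₀/2) * ‖z - p‖^2)
      have hφd : HasDerivWithinAt
          (fun t : ℝ => barW n h c₀ s 1 p (z + t • EuclideanSpace.single (Fin.last n) (1:ℝ)))
          (d + -(2*s)) (Set.Ioi 0) 0 := by
        refine HasDerivWithinAt.congr_of_eventuallyEq h3 ?_ ?_
        · filter_upwards with u
          exact hident u
        · exact hident 0
      have hmin' : ∀ t ∈ Set.Ioc (0:ℝ) (2/(15*(n:ℝ))),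
          (fun t : ℝ => barW n h c₀ s 1 p
            (z + t • EuclideanSpace.single (Fin.last n) (1:ℝ))) 0
          ≤ (fun t : ℝ => barW n h c₀ s 1 p
            (z + t • EuclideanSpace.single (Fin.last n) (1:ℝ))) t := by
        intro t ht
        have hmem : (z + t • EuclideanSpace.single (Fin.last n) (1:ℝ)) ∈ barK n 1 p := by
          refine ⟨?_, ?_, ?_⟩
          · rw [idA t, idB t]; linarith [hk1']
          · rw [idB t]; simpa using ht.1.le
          · rw [idB t]; simpa using ht.2
        have hle2 := isMinOn_iff.mp hmin _ hmem
        have h0id : z + (0:ℝ) • EuclideanSpace.single (Fin.last n) (1:ℝ) = z := by simp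
        simpa [h0id] using hle2
      have hfin := deriv_nonneg_of_min' _ (d + -(2*s)) (2/(15*(n:ℝ))) hbpos hφd hmin'
      linarith [hd, hspos]
    have hzbK : zb ∈ barK n 1 p := by
      have hzp : zb - p = (zb (Fin.last n)) • EuclideanSpace.single (Fin.last n) (1:ℝ) := by
        rw [hpdef]; abel
      have hzpn : ‖zb - p‖^2 = (zb (Fin.last n))^2 := by
        rw [hzp, norm_smul, EuclideanSpace.norm_single, norm_one, mul_one,
          Real.norm_eq_abs, sq_abs]
      refine ⟨?_, ?_, ?_⟩
      · rw [hzpn]; norm_num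
      · rw [one_mul]; exact h0
      · rw [one_mul]; linarith [hη8']
    have hwz := box_barrier n hn c₀ s hc₀ hspos hslt h hcont hC2 harm hiii hiv
      1 (Or.inl rfl) p hpl hpn Hface1 zb hzbK
    have hzpn : ‖zb - p‖^2 = (zb (Fin.last n))^2 := by
      have hzp : zb - p = (zb (Fin.last n)) • EuclideanSpace.single (Fin.last n) (1:ℝ) := by
        rw [hpdef]; abel
      rw [hzp, norm_smul, EuclideanSpace.norm_single, norm_one, mul_one,
        Real.norm_eq_abs, sq_abs]
    rw [barW, hzpn] at hwz
    have t1 : 0 ≤ c₀ * (n:ℝ) * (zb (Fin.last n))^2 := by positivity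
    have t2 : 0 ≤ s * zb (Fin.last n) := mul_nonneg hspos.le h0
    nlinarith [hwz, t1, t2]
  -- final assembly
  intro z hz
  rw [mem_ball_zero_iff] at hz
  norm_num at hz
  have hzball : z ∈ Metric.ball (0 : EuclideanSpace ℝ (Fin (n+1))) 1 := by
    rw [mem_ball_zero_iff]; linarith
  have hphalf : ‖z - (z (Fin.last n)) • EuclideanSpace.single (Fin.last n) (1:ℝ)‖ ≤ 1/2 := by
    have hps : ‖z - (z (Fin.last n)) • EuclideanSpace.single (Fin.last n) (1:ℝ)‖^2
        = ‖z‖^2 - (z (Fin.last n))^2 := by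
      rw [norm_sub_sq_real, real_inner_smul_right, norm_smul,
        EuclideanSpace.norm_single, norm_one, mul_one, Real.norm_eq_abs, sq_abs]
      simp only [EuclideanSpace.inner_single_right, norm_one, mul_one, RCLike.conj_to_real]
      ring
    have h1 : ‖z - (z (Fin.last n)) • EuclideanSpace.single (Fin.last n) (1:ℝ)‖^2 ≤ 1/4 := by
      rw [hps]
      nlinarith [sq_nonneg (z (Fin.last n)), norm_nonneg z, hz]
    nlinarith [norm_nonneg (z - (z (Fin.last n)) • EuclideanSpace.single (Fin.last n) (1:ℝ))]
  have hppn : ‖z - (z (Fin.last n)) • EuclideanSpace.single (Fin.last n) (1:ℝ)‖ ≤ 7/10 :=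
    le_trans hphalf (by norm_num)
  rcases lt_or_ge η |z (Fin.last n)| with hgt | habs
  · exact hii z hzball hgt
  rcases le_or_gt 0 (z (Fin.last n)) with hpos | hneg
  · exact claimU z hppn hpos (by rw [abs_of_nonneg hpos] at habs; exact habs)
  · -- lower half : box_barrier with ε = -1
    set p := z - (z (Fin.last n)) • EuclideanSpace.single (Fin.last n) (1:ℝ) with hpdef
    have hpl : p (Fin.last n) = 0 := by
      rw [hpdef]
      simp [PiLp.sub_apply, PiLp.smul_apply, EuclideanSpace.single_apply]
    have Hface2 : ∀ y ∈ barK n (-1) p, y (Fin.last n) = 0 →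
        IsMinOn (barW n h c₀ s (-1) p) (barK n (-1) p) y →
        0 ≤ h y + (c₀/2) * ‖y - p‖^2 := by
      intro y hyK hy0 _
      obtain ⟨hk1, hk2, hk3⟩ := hyK
      have hk1' : ‖y - p‖^2 ≤ 1/25 := by
        rw [hy0] at hk1; nlinarith [hk1]
      have hyn : ‖y - p‖ ≤ 1/5 := by nlinarith [norm_nonneg (y - p)]
      have hynorm : ‖y - (y (Fin.last n)) • EuclideanSpace.single (Fin.last n) (1:ℝ)‖ ≤ 7/10 := by
        rw [hy0]
        have hvy : p + (y - p) = y := by abel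
        simp only [zero_smul, sub_zero]
        calc ‖y‖ = ‖p + (y - p)‖ := by rw [hvy]
          _ ≤ ‖p‖ + ‖y - p‖ := norm_add_le _ _
          _ ≤ 7/10 := by linarith [hphalf]
      have hhy : 0 ≤ h y := claimU y hynorm (le_of_eq hy0.symm) (by rw [hy0]; exact hη.le)
      positivity
    have hzK : z ∈ barK n (-1) p := by
      have hzp : z - p = (z (Fin.last n)) • EuclideanSpace.single (Fin.last n) (1:ℝ) := by
        rw [hpdef]; abel
      have hzpn : ‖z - p‖^2 = (z (Fin.last n))^2 := by
        rw [hzp, norm_smul, EuclideanSpace.norm_single, norm_one, mul_one,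
          Real.norm_eq_abs, sq_abs]
      refine ⟨?_, ?_, ?_⟩
      · rw [hzpn]; norm_num
      · nlinarith [hneg]
      · have : |z (Fin.last n)| = -(z (Fin.last n)) := abs_of_neg hneg
        nlinarith [habs, hη8', this]
    have hwz := box_barrier n hn c₀ s hc₀ hspos hslt h hcont hC2 harm hiii hiv
      (-1) (Or.inr rfl) p hpl hppn Hface2 z hzK
    have hzpn : ‖z - p‖^2 = (z (Fin.last n))^2 := by
      have hzp : z - p = (z (Fin.last n)) • EuclideanSpace.single (Fin.last n) (1:ℝ) := by
        rw [hpdef]; abel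
      rw [hzp, norm_smul, EuclideanSpace.norm_single, norm_one, mul_one,
        Real.norm_eq_abs, sq_abs]
    rw [barW, hzpn] at hwz
    have t1 : 0 ≤ c₀ * (n:ℝ) * (z (Fin.last n))^2 := by positivity
    have t2 : 0 ≤ s * (-(z (Fin.last n))) := mul_nonneg hspos.le (by linarith)
    nlinarith [hwz, t1, t2]
end
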